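/- Let M be a set, let μ̂ be a measure on M (with a given measurable space structure), let Υ : M → ℝ, let n, k ∈ ℝ with k ≠ n/2, let P and P̂ be ℝ-linear operators on real-valued functions on M such that P̂ is the (n/2+k, n/2-k)-conformal transform of P by Υ, i.e. (P̂ f)(x) = exp(-(n/2+k)·Υ(x)) · P(y ↦ exp((n/2-k)·Υ(y))·f(y))(x), and suppose P̂ is formally self-adjoint with respect to μ̂, i.e. ∫ f·(P̂ g) dμ̂ = ∫ (P̂ f)·g dμ̂ for all f, g : M → ℝ. Let u : M → ℝ satisfy P u = 0, set û(x) := exp((k-n/2)·Υ(x))·u(x), and set v := (2/(n-2k))·P̂ 1, where 1 is the constant function one. Then ∫ û·v dμ̂ = 0. -/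

import Mathlib

open Real MeasureTheory

/-! Conformal covariance puts `û = e^{(k-n/2)Υ} u` in the kernel of `P̂`; self-adjointness then
moves `P̂` from the constant `1` onto `û`, so the integral vanishes. -/

theorem conformal_transform_eq_zero_of_eq_zero {M : Type*} {P Phat : (M → ℝ) →ₗ[ℝ] (M → ℝ)}
    {Υ : M → ℝ} {a b : ℝ}
    (hconf : ∀ (f : M → ℝ) (x : M),
      Phat f x = Real.exp (-a * Υ x) * P (fun y => Real.exp (b * Υ y) * f y) x)
    {u : M → ℝ} (hu : P u = 0) :
    Phat (fun y => Real.exp (-b * Υ y) * u y) = 0 := by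
  have hcancel : (fun y => Real.exp (b * Υ y) * (Real.exp (-b * Υ y) * u y)) = u := by
    funext y
    rw [← mul_assoc, ← Real.exp_add, neg_mul, add_neg_cancel, Real.exp_zero, one_mul]
  funext x
  rw [hconf, hcancel, hu, Pi.zero_apply, mul_zero]

theorem integral_mul_apply_eq_zero_of_selfAdjoint {M : Type*} [MeasurableSpace M]
    {μ : Measure M} {Phat : (M → ℝ) →ₗ[ℝ] (M → ℝ)}
    (hsa : ∀ f g : M → ℝ, ∫ x, f x * Phat g x ∂μ = ∫ x, Phat f x * g x ∂μ)
    {f : M → ℝ} (hf : Phat f = 0) (g : M → ℝ) :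
    ∫ x, f x * Phat g x ∂μ = 0 := by
  simp [hsa, hf]

theorem integral_kernel_against_Qk_eq_zero
    {M : Type*} [MeasurableSpace M] (μhat : Measure M) (Υ : M → ℝ) (n k : ℝ)
    (P Phat : (M → ℝ) →ₗ[ℝ] (M → ℝ))
    (hconf : ∀ (f : M → ℝ) (x : M),
      Phat f x = Real.exp (-(n / 2 + k) * Υ x)
        * P (fun y => Real.exp ((n / 2 - k) * Υ y) * f y) x)
    (hsa : ∀ f g : M → ℝ,
      ∫ x, f x * Phat g x ∂μhat = ∫ x, Phat f x * g x ∂μhat)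
    (u : M → ℝ) (hu : P u = 0) :
    ∫ x, (Real.exp ((k - n / 2) * Υ x) * u x)
        * ((2 / (n - 2 * k)) * Phat (fun _ => (1 : ℝ)) x) ∂μhat = 0 := by
  have hker : Phat (fun y => Real.exp ((k - n / 2) * Υ y) * u y) = 0 := by
    simpa only [neg_sub] using conformal_transform_eq_zero_of_eq_zero hconf hu
  calc _ = 2 / (n - 2 * k) * ∫ x, Real.exp ((k - n / 2) * Υ x) * u x
          * Phat (fun _ => (1 : ℝ)) x ∂μhat := by
        rw [← integral_const_mul]
        congr 1 with x
        ring
    _ = 0 := by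
        rw [integral_mul_apply_eq_zero_of_selfAdjoint hsa hker, mul_zero]
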